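/- If an n-vertex graph G has maximum number of copies of K_r among n-vertex graphs with no k+1 pairwise vertex-disjoint copies of K_r, and n ≥ (k+1)r, then G contains k pairwise vertex-disjoint copies of K_r. -/

import Mathlib

open SimpleGraph Finset Function

noncomputable local instance {V : Type*} (G : SimpleGraph V) : DecidableRel G.Adj :=
  fun _ _ => Classical.dec _

/-- `G` contains a copy of the 5-cycle as a subgraph. -/
def HasC5Copy {V : Type*} (G : SimpleGraph V) : Prop :=
  ∃ f : Fin 5 → V, Injective f ∧ ∀ i, G.Adj (f i) (f (i + 1))

/-- `G` contains two vertex-disjoint copies of the 5-cycle. -/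
def HasTwoDisjointC5 {V : Type*} (G : SimpleGraph V) : Prop :=
  ∃ f g : Fin 5 → V, Injective f ∧ Injective g ∧
    (∀ i, G.Adj (f i) (f (i + 1))) ∧ (∀ i, G.Adj (g i) (g (i + 1))) ∧
    ∀ i j, f i ≠ g j

/-- The join of two graphs. -/
def GraphJoin {V W : Type*} (G : SimpleGraph V) (H : SimpleGraph W) : SimpleGraph (V ⊕ W) where
  Adj x y :=
    match x, y with
    | Sum.inl a, Sum.inl b => G.Adj a b
    | Sum.inr a, Sum.inr b => H.Adj a b
    | Sum.inl _, Sum.inr _ => True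
    | Sum.inr _, Sum.inl _ => True
  symm := by constructor; rintro (a|a) (b|b) h <;> simp_all <;> exact h.symm
  loopless := by constructor; rintro (a|a) h; exacts [G.irrefl h, H.irrefl h]

/-- `G` contains `k` pairwise vertex-disjoint copies of `K_r`. -/
def HasDisjointCliques {V : Type*} (G : SimpleGraph V) (k r : ℕ) : Prop :=
  ∃ f : Fin k → Finset V, (∀ i, G.IsNClique r (f i)) ∧
    ∀ i j, i ≠ j → Disjoint (f i) (f j)

/-- Six pairwise vertex-disjoint copies of `P₄` inside the neighborhood of `v`. -/
def SixDisjointP4InNbhd {V : Type*} (G : SimpleGraph V) (v : V) : Prop :=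
  ∃ f : Fin 6 → Fin 4 → V,
    Injective (fun p : Fin 6 × Fin 4 => f p.1 p.2) ∧
    (∀ i j, G.Adj v (f i j)) ∧
    (∀ i, G.Adj (f i 0) (f i 1) ∧ G.Adj (f i 1) (f i 2) ∧ G.Adj (f i 2) (f i 3))

/-- `u` is joined to (at least) `t` pairwise disjoint `r`-cliques inside `S`. -/
def JoinedToDisjointCliques {V : Type*} (G : SimpleGraph V) (u : V) (S : Set V) (t r : ℕ) : Prop :=
  ∃ f : Fin t → Finset V, (∀ j, ↑(f j) ⊆ S ∧ G.IsNClique r (f j) ∧ ∀ w ∈ f j, G.Adj u w) ∧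
    ∀ i j, i ≠ j → Disjoint (f i) (f j)



/-- `G` with `v` made universal. -/
private def addUniv {V : Type*} (G : SimpleGraph V) (v : V) : SimpleGraph V where
  Adj x y := G.Adj x y ∨ (x ≠ y ∧ (x = v ∨ y = v))
  symm := by
    constructor
    intro x y h
    rcases h with h | ⟨hne, h⟩
    · exact Or.inl h.symm
    · exact Or.inr ⟨hne.symm, h.symm⟩
  loopless := by
    constructor
    intro x h
    rcases h with h | ⟨hne, _⟩
    · exact G.irrefl h
    · exact hne rfl

private lemma addUniv_free {V : Type*} (G : SimpleGraph V) (v : V) (k r : ℕ)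
    (hnk : ¬ HasDisjointCliques G k r) : ¬ HasDisjointCliques (addUniv G v) (k + 1) r := by
  rintro ⟨f, hf, hdisj⟩
  apply hnk
  have key : ∃ g : Fin k → Fin (k + 1), Injective g ∧ ∀ j, v ∉ f (g j) := by
    by_cases hv : ∃ i, v ∈ f i
    · obtain ⟨i₀, hi₀⟩ := hv
      refine ⟨i₀.succAbove, Fin.succAbove_right_injective, fun j hj => ?_⟩
      exact (Finset.disjoint_left.mp (hdisj i₀ (i₀.succAbove j) (Fin.succAbove_ne i₀ j).symm) hi₀) hj
    · push_neg at hv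
      exact ⟨Fin.castSucc, Fin.castSucc_injective _, fun j => hv _⟩
  obtain ⟨g, hginj, hgv⟩ := key
  refine ⟨fun j => f (g j), fun j => ?_, fun i j hij => hdisj _ _ (fun h => hij (hginj h))⟩
  refine ⟨fun x hx y hy hxy => ?_, (hf (g j)).2⟩
  rcases (hf (g j)).1 hx hy hxy with h | ⟨_, hxv | hyv⟩
  · exact h
  · exact absurd (hxv ▸ hx) (by simpa using hgv j)
  · exact absurd (hyv ▸ hy) (by simpa using hgv j)

/-- A `(k+1)K_r`-free graph on `n ≥ (k+1)r` vertices maximizing the number of `K_r`'s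
contains `k` pairwise vertex-disjoint copies of `K_r`. -/
theorem stmt14 (n k r : ℕ) (hn : (k + 1) * r ≤ n) (G : SimpleGraph (Fin n))
    (hfree : ¬ HasDisjointCliques G (k + 1) r)
    (hmax : ∀ H : SimpleGraph (Fin n), ¬ HasDisjointCliques H (k + 1) r →
      (H.cliqueFinset r).card ≤ (G.cliqueFinset r).card) :
    HasDisjointCliques G k r := by
  -- trivial case k = 0
  rcases Nat.eq_zero_or_pos k with hk0 | hkpos
  · subst hk0
    exact ⟨fun i => i.elim0, fun i => i.elim0, fun i => i.elim0⟩
  -- trivial case r = 0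
  rcases Nat.eq_zero_or_pos r with hr0 | hrpos
  · subst hr0
    exact absurd ⟨fun _ => ∅, fun i => by simp, fun i j _ => Finset.disjoint_empty_left _⟩ hfree
  -- the embedding of (k+1) disjoint r-blocks into Fin n
  set e : Fin (k + 1) → Fin r → Fin n :=
    fun i j => Fin.castLE hn (finProdFinEquiv (i, j)) with he
  have einj : ∀ i j i' j', e i j = e i' j' → i = i' ∧ j = j' := by
    intro i j i' j' h
    have := finProdFinEquiv.injective (Fin.castLE_injective hn h)
    exact ⟨congrArg Prod.fst this, congrArg Prod.snd this⟩
  have ejinj : ∀ i, Injective (e i) := fun i a b h => (einj i a i b h).2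
  -- case r = 1 : contradiction with hfree
  rcases eq_or_lt_of_le (Nat.succ_le_of_lt hrpos) with hr1 | hr2
  · exfalso
    apply hfree
    refine ⟨fun i => {e i ⟨0, by omega⟩}, fun i => ?_, fun i j hij => ?_⟩
    · constructor
      · simp [Set.pairwise_singleton]
      · simp [← hr1]
    · simp only [Finset.disjoint_singleton]
      exact fun h => hij (einj _ _ _ _ h).1
  -- r ≥ 2. By contradiction.
  by_contra hnk
  -- Step A: G has an r-clique
  set R : Finset (Fin n) := Finset.image (e 0) Finset.univ with hR
  have hRcard : R.card = r := by
    rw [hR, Finset.card_image_of_injective _ (ejinj 0), Finset.card_univ, Fintype.card_fin]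
  have hCex : ∃ C, C ∈ G.cliqueFinset r := by
    set H₀ : SimpleGraph (Fin n) := SimpleGraph.fromRel (fun x y => x ∈ R ∧ y ∈ R) with hH₀
    have hmem : ∀ {x y : Fin n}, H₀.Adj x y → x ∈ R := by
      intro x y hxy
      rcases hxy with ⟨_, ⟨hx, _⟩ | ⟨_, hx⟩⟩ <;> exact hx
    have hfree₀ : ¬ HasDisjointCliques H₀ (k + 1) r := by
      rintro ⟨f, hf, hdisj⟩
      have hsubR : ∀ i, f i ⊆ R := by
        intro i z hz
        obtain ⟨w, hw, hwz⟩ := Finset.exists_mem_ne (by rw [(hf i).2]; omega) z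
        exact hmem ((hf i).1 hz hw (Ne.symm hwz))
      have h01 : Disjoint (f 0) (f 1) := hdisj 0 1 (by simp [Fin.ext_iff]; omega)
      have : (f 0 ∪ f 1).card ≤ R.card :=
        Finset.card_le_card (Finset.union_subset (hsubR 0) (hsubR 1))
      rw [Finset.card_union_of_disjoint h01, (hf 0).2, (hf 1).2, hRcard] at this
      omega
    have hRclique : R ∈ H₀.cliqueFinset r := by
      rw [SimpleGraph.mem_cliqueFinset_iff]
      refine ⟨fun x hx y hy hxy => ⟨hxy, Or.inl ⟨hx, hy⟩⟩, hRcard⟩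
    have : 0 < (G.cliqueFinset r).card :=
      by
        have h1 : 0 < (H₀.cliqueFinset r).card := Finset.card_pos.mpr ⟨R, hRclique⟩
        have h2 := hmax H₀ hfree₀
        refine Nat.lt_of_lt_of_le ?_ h2
        convert h1 using 3
    exact Finset.card_pos.mp this |>.exists_mem
  obtain ⟨C, hCmem⟩ := hCex
  have hC : G.IsNClique r C := (SimpleGraph.mem_cliqueFinset_iff).mp hCmem
  -- Step B: extension lemma
  have ext_adj : ∀ (v : Fin n) (S : Finset (Fin n)), G.IsNClique (r - 1) S → v ∉ S →
      ∀ s ∈ S, G.Adj v s := by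
    intro v S hS hvS s hs
    set H := addUniv G v with hHdef
    have hGH : G ≤ H := fun x y h => Or.inl h
    have hsub : G.cliqueFinset r ⊆ H.cliqueFinset r := fun s hs =>
      SimpleGraph.mem_cliqueFinset_iff.mpr
        (((SimpleGraph.mem_cliqueFinset_iff).mp hs).mono hGH)
    have heq : G.cliqueFinset r = H.cliqueFinset r :=
      Finset.eq_of_subset_of_card_le hsub (hmax H (addUniv_free G v k r hnk))
    have hHcl : H.IsNClique r (insert v S) := by
      constructor
      · intro x hx y hy hxy
        simp only [Finset.coe_insert, Set.mem_insert_iff, Finset.mem_coe] at hx hy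
        rcases hx with rfl | hx
        · rcases hy with rfl | hy
          · exact absurd rfl hxy
          · exact Or.inr ⟨hxy, Or.inl rfl⟩
        · rcases hy with rfl | hy
          · exact Or.inr ⟨hxy, Or.inr rfl⟩
          · exact Or.inl (hS.1 hx hy hxy)
      · rw [Finset.card_insert_of_notMem hvS, hS.2]; omega
    have hGcl : G.IsNClique r (insert v S) := by
      rw [← SimpleGraph.mem_cliqueFinset_iff, heq, SimpleGraph.mem_cliqueFinset_iff]
      exact hHcl
    exact hGcl.1 (by simp) (by simp [hs]) (fun h => hvS (h ▸ hs))
  -- Step C1: every vertex is adjacent to every vertex of C (other than itself)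
  have adjC : ∀ (w : Fin n), ∀ c ∈ C, w ≠ c → G.Adj w c := by
    intro w c hc hne
    by_cases hw : w ∈ C
    · refine ext_adj w (C.erase w) ⟨hC.1.subset (by simp [Finset.erase_subset]), ?_⟩
        (Finset.notMem_erase w C) c (Finset.mem_erase.mpr ⟨hne.symm, hc⟩)
      rw [Finset.card_erase_of_mem hw, hC.2]
    · obtain ⟨x, hx, hxc⟩ := Finset.exists_mem_ne (by rw [hC.2]; omega) c
      refine ext_adj w (C.erase x) ⟨hC.1.subset (by simp [Finset.erase_subset]), ?_⟩
        (fun h => hw (Finset.mem_of_mem_erase h)) c (Finset.mem_erase.mpr ⟨Ne.symm hxc, hc⟩)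
      rw [Finset.card_erase_of_mem hx, hC.2]
  -- Step C2: G is complete
  have adjAll : ∀ u v : Fin n, u ≠ v → G.Adj u v := by
    intro u v huv
    have hcard : r - 2 ≤ (C \ {u, v}).card := by
      have h1 : C.card - ({u, v} : Finset (Fin n)).card ≤ (C \ {u, v}).card :=
        Finset.le_card_sdiff _ _
      have h2 : ({u, v} : Finset (Fin n)).card ≤ 2 := Finset.card_insert_le _ _ |>.trans (by simp)
      have h3 : C.card = r := hC.2
      omega
    obtain ⟨T, hTsub, hTcard⟩ := Finset.exists_subset_card_eq hcard
    have huT : u ∉ T := fun h => by simpa using (hTsub h)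
    have hvT : v ∉ T := fun h => by simpa using (hTsub h)
    have hTC : T ⊆ C := hTsub.trans (Finset.sdiff_subset)
    have hScl : G.IsNClique (r - 1) (insert u T) := by
      constructor
      · intro x hx y hy hxy
        simp only [Finset.coe_insert, Set.mem_insert_iff, Finset.mem_coe] at hx hy
        rcases hx with rfl | hx
        · rcases hy with rfl | hy
          · exact absurd rfl hxy
          · exact adjC x y (hTC hy) hxy
        · rcases hy with rfl | hy
          · exact (adjC y x (hTC hx) (Ne.symm hxy)).symm
          · exact hC.1 (hTC hx) (hTC hy) hxy
      · rw [Finset.card_insert_of_notMem huT, hTcard]; omega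
    have hvS : v ∉ insert u T := by
      simp only [Finset.mem_insert]
      rintro (rfl | h)
      · exact huv rfl
      · exact hvT h
    exact (ext_adj v (insert u T) hScl hvS u (Finset.mem_insert_self u T)).symm
  -- Final contradiction with hfree
  apply absurd _ hfree
  refine ⟨fun i => Finset.image (e i) Finset.univ, fun i => ?_, fun i j hij => ?_⟩
  · constructor
    · intro x hx y hy hxy
      exact adjAll x y hxy
    · rw [Finset.card_image_of_injective _ (ejinj i), Finset.card_univ, Fintype.card_fin]
  · rw [Finset.disjoint_left]
    intro a ha ha'
    simp only [Finset.mem_image, Finset.mem_univ, true_and] at ha ha'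
    obtain ⟨x, hx⟩ := ha
    obtain ⟨y, hy⟩ := ha'
    exact hij (einj i x j y (hx.trans hy.symm)).1
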